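/- (Data-processing step in the converse) Let U, V, X, Z̃, Y be random variables on finite alphabets forming the Markov chain U ↔ V ↔ X ↔ Z̃ ↔ Y. Then I(V; Z̃ | U) − I(V; Y | U) ≤ I(X; Z̃) − I(X; Y). -/

import Mathlib

open Finset

/-- Probability that a random variable `X` on the finite sample space `Ω`
(with mass function `μ`) takes the value `x`. -/
noncomputable def prob {Ω α : Type*} [Fintype Ω] [DecidableEq α]
    (μ : Ω → ℝ) (X : Ω → α) (x : α) : ℝ :=
  ∑ ω, if X ω = x then μ ω else 0

/-- Shannon entropy (base 2) of the random variable `X`. -/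
noncomputable def ent {Ω α : Type*} [Fintype Ω] [Fintype α] [DecidableEq α]
    (μ : Ω → ℝ) (X : Ω → α) : ℝ :=
  -∑ x, prob μ X x * Real.logb 2 (prob μ X x)

/-- Mutual information I(X;Y) = H(X) + H(Y) - H(X,Y). -/
noncomputable def mutInf {Ω α β : Type*} [Fintype Ω] [Fintype α] [Fintype β]
    [DecidableEq α] [DecidableEq β] (μ : Ω → ℝ) (X : Ω → α) (Y : Ω → β) : ℝ :=
  ent μ X + ent μ Y - ent μ (fun ω => (X ω, Y ω))

/-- Conditional mutual information
I(X;Y|W) = H(X,W) + H(Y,W) - H(X,Y,W) - H(W). -/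
noncomputable def condMI {Ω α β γ : Type*} [Fintype Ω] [Fintype α] [Fintype β] [Fintype γ]
    [DecidableEq α] [DecidableEq β] [DecidableEq γ]
    (μ : Ω → ℝ) (X : Ω → α) (Y : Ω → β) (W : Ω → γ) : ℝ :=
  ent μ (fun ω => (X ω, W ω)) + ent μ (fun ω => (Y ω, W ω))
    - ent μ (fun ω => (X ω, Y ω, W ω)) - ent μ W

/-! Since U ↔ V ↔ X ↔ Z̃ ↔ Y is a Markov chain, its joint law factors through the consecutive
pairs, which saturates the chain rule for entropy:
H(U,V,X,Z̃,Y) + H(V) + H(X) + H(Z̃) = H(U,V) + H(V,X) + H(X,Z̃) + H(Z̃,Y).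
Modulo this identity, (I(X;Z̃) − I(X;Y)) − (I(V;Z̃|U) − I(V;Y|U)) is the sum
I(U;X|Y,V) + I(U;Z̃|Y) + I(U;Y|V) + I(V;Y|X) + I(V;Y|Z̃,U) + I(X;Z̃|U,Y,V),
and conditional mutual information is nonnegative by Gibbs' inequality `log r ≤ r - 1`. -/

theorem Finset.sum_mul_logb_nonpos {ι : Type*} (s : Finset ι) {w r : ι → ℝ}
    (hw : ∀ i ∈ s, 0 ≤ w i) (hr : ∀ i ∈ s, w i ≠ 0 → 0 < r i)
    (h : ∑ i ∈ s, w i * r i ≤ ∑ i ∈ s, w i) :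
    ∑ i ∈ s, w i * Real.logb 2 (r i) ≤ 0 := by
  have hlog2 : 0 < Real.log 2 := Real.log_pos one_lt_two
  have hterm : ∀ i ∈ s, w i * Real.logb 2 (r i) ≤ (w i * r i - w i) / Real.log 2 := by
    intro i hi
    rcases (hw i hi).eq_or_lt with hwi | hwi
    · simp [← hwi]
    rw [Real.logb, mul_div_assoc', div_le_div_iff_of_pos_right hlog2]
    nlinarith [Real.log_le_sub_one_of_pos (hr i hi hwi.ne')]
  calc ∑ i ∈ s, w i * Real.logb 2 (r i) ≤ ∑ i ∈ s, (w i * r i - w i) / Real.log 2 :=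
        sum_le_sum hterm
    _ = (∑ i ∈ s, w i * r i - ∑ i ∈ s, w i) / Real.log 2 := by
        rw [← sum_div, sum_sub_distrib]
    _ ≤ 0 := div_nonpos_of_nonpos_of_nonneg (by linarith) hlog2.le

section Entropy

variable {Ω α β γ : Type*} [Fintype Ω] [DecidableEq α] [DecidableEq β] [DecidableEq γ]
  (μ : Ω → ℝ)

theorem prob_nonneg (hpos : ∀ ω, 0 ≤ μ ω) (X : Ω → α) (x : α) : 0 ≤ prob μ X x :=
  sum_nonneg fun ω _ => by split_ifs <;> simp [hpos ω]

theorem le_prob_apply (hpos : ∀ ω, 0 ≤ μ ω) (X : Ω → α) (ω : Ω) :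
    μ ω ≤ prob μ X (X ω) := by
  unfold prob
  simpa using single_le_sum (f := fun ω' => if X ω' = X ω then μ ω' else 0)
    (fun ω' _ => by split_ifs <;> simp [hpos ω']) (mem_univ ω)

theorem prob_apply_pos (hpos : ∀ ω, 0 ≤ μ ω) (X : Ω → α) {ω : Ω} (hω : μ ω ≠ 0) :
    0 < prob μ X (X ω) :=
  (hpos ω).lt_of_ne' hω |>.trans_le (le_prob_apply μ hpos X ω)

theorem prob_congr {X : Ω → α} {Y : Ω → β} {a : α} {b : β}
    (h : ∀ ω, X ω = a ↔ Y ω = b) : prob μ X a = prob μ Y b :=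
  sum_congr rfl fun ω _ => if_congr (h ω) rfl rfl

theorem sum_prob_mul [Fintype α] (X : Ω → α) (F : α → ℝ) :
    ∑ x, prob μ X x * F x = ∑ ω, μ ω * F (X ω) := by
  simp only [prob, sum_mul, ite_mul, zero_mul]
  rw [sum_comm]
  simp

theorem sum_prob_eq_sum [Fintype α] (X : Ω → α) : ∑ x, prob μ X x = ∑ ω, μ ω := by
  simpa using sum_prob_mul μ X 1

theorem sum_prob_pair_left [Fintype α] (A : Ω → α) (C : Ω → γ) (c : γ) :
    ∑ a, prob μ (fun ω => (A ω, C ω)) (a, c) = prob μ C c := by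
  simp only [prob, Prod.mk.injEq, ite_and]
  rw [sum_comm]
  simp

theorem ent_eq_neg_sum [Fintype α] (X : Ω → α) :
    ent μ X = -∑ ω, μ ω * Real.logb 2 (prob μ X (X ω)) := by
  rw [ent, sum_prob_mul]

theorem ent_congr [Fintype α] [Fintype β] {X : Ω → α} {Y : Ω → β}
    (h : ∀ ω ω', X ω = X ω' ↔ Y ω = Y ω') : ent μ X = ent μ Y := by
  simp only [ent_eq_neg_sum]
  congr 1
  refine sum_congr rfl fun ω _ => ?_
  rw [prob_congr μ fun ω' => h ω' ω]

theorem sum_prob_mul_prob_div_prob [Fintype α] [Fintype β] [Fintype γ]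
    (A : Ω → α) (B : Ω → β) (C : Ω → γ) :
    ∑ t : α × β × γ, prob μ (fun ω => (A ω, C ω)) (t.1, t.2.2)
      * prob μ (fun ω => (B ω, C ω)) (t.2.1, t.2.2) / prob μ C t.2.2 = ∑ ω, μ ω := by
  simp only [Fintype.sum_prod_type]
  rw [(sum_congr rfl fun _ _ => sum_comm).trans sum_comm]
  simp only [← sum_div, ← sum_mul_sum, sum_prob_pair_left, mul_self_div_self]
  exact sum_prob_eq_sum μ C

theorem condMI_nonneg [Fintype α] [Fintype β] [Fintype γ] (hpos : ∀ ω, 0 ≤ μ ω)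
    (A : Ω → α) (B : Ω → β) (C : Ω → γ) : 0 ≤ condMI μ A B C := by
  set r : α × β × γ → ℝ := fun t =>
    prob μ (fun ω => (A ω, C ω)) (t.1, t.2.2) * prob μ (fun ω => (B ω, C ω)) (t.2.1, t.2.2)
      / (prob μ (fun ω => (A ω, B ω, C ω)) t * prob μ C t.2.2) with hr
  have hlog : ∀ ω, μ ω * Real.logb 2 (r (A ω, B ω, C ω)) =
      μ ω * Real.logb 2 (prob μ (fun ω => (A ω, C ω)) (A ω, C ω))
        + μ ω * Real.logb 2 (prob μ (fun ω => (B ω, C ω)) (B ω, C ω))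
        - μ ω * Real.logb 2 (prob μ (fun ω => (A ω, B ω, C ω)) (A ω, B ω, C ω))
        - μ ω * Real.logb 2 (prob μ C (C ω)) := by
    intro ω
    rcases eq_or_ne (μ ω) 0 with h | h
    · simp [h]
    simp only [hr, Real.logb_div, Real.logb_mul, mul_ne_zero_iff,
      (prob_apply_pos μ hpos _ h).ne', ne_eq, not_false_eq_true, and_self]
    ring
  have hmass : ∑ ω, μ ω * r (A ω, B ω, C ω) ≤ ∑ ω, μ ω := by
    rw [← sum_prob_mul μ (fun ω => (A ω, B ω, C ω)), ← sum_prob_mul_prob_div_prob μ A B C]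
    gcongr with t
    rcases (prob_nonneg μ hpos _ t).eq_or_lt with h | h
    · rw [← h, zero_mul]
      exact div_nonneg (mul_nonneg (prob_nonneg μ hpos _ _) (prob_nonneg μ hpos _ _))
        (prob_nonneg μ hpos _ _)
    · rw [hr, mul_div_assoc', mul_div_mul_left _ _ h.ne']
  have hpos_r : ∀ ω ∈ univ, μ ω ≠ 0 → 0 < r (A ω, B ω, C ω) := fun ω _ h =>
    div_pos (mul_pos (prob_apply_pos μ hpos _ h) (prob_apply_pos μ hpos _ h))
      (mul_pos (prob_apply_pos μ hpos _ h) (prob_apply_pos μ hpos C h))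
  have hgibbs := sum_mul_logb_nonpos univ (fun ω _ => hpos ω) hpos_r hmass
  simp only [hlog, sum_sub_distrib, sum_add_distrib] at hgibbs
  simp only [condMI, ent_eq_neg_sum]
  linarith

end Entropy

section MarkovChain

variable {Ω αU αV αX αZ αY : Type*}
  [Fintype Ω] [Fintype αU] [Fintype αV] [Fintype αX] [Fintype αZ] [Fintype αY]
  [DecidableEq αU] [DecidableEq αV] [DecidableEq αX] [DecidableEq αZ] [DecidableEq αY]
  (μ : Ω → ℝ) (U : Ω → αU) (V : Ω → αV) (X : Ω → αX) (Z : Ω → αZ) (Y : Ω → αY)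

theorem ent_eq_of_markov_chain (hpos : ∀ ω, 0 ≤ μ ω)
    (hmarkov : ∀ (u : αU) (v : αV) (x : αX) (z : αZ) (y : αY),
      prob μ (fun ω => (U ω, V ω, X ω, Z ω, Y ω)) (u, v, x, z, y)
          * prob μ V v * prob μ X x * prob μ Z z
        = prob μ (fun ω => (U ω, V ω)) (u, v) * prob μ (fun ω => (V ω, X ω)) (v, x)
          * prob μ (fun ω => (X ω, Z ω)) (x, z) * prob μ (fun ω => (Z ω, Y ω)) (z, y)) :
    ent μ (fun ω => (U ω, V ω, X ω, Z ω, Y ω)) + ent μ V + ent μ X + ent μ Z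
      = ent μ (fun ω => (U ω, V ω)) + ent μ (fun ω => (V ω, X ω))
        + ent μ (fun ω => (X ω, Z ω)) + ent μ (fun ω => (Z ω, Y ω)) := by
  simp only [ent_eq_neg_sum, ← neg_add, neg_inj, ← sum_add_distrib, ← mul_add]
  refine sum_congr rfl fun ω _ => ?_
  rcases eq_or_ne (μ ω) 0 with h | h
  · simp [h]
  have := congrArg (Real.logb 2) (hmarkov (U ω) (V ω) (X ω) (Z ω) (Y ω))
  simp only [Real.logb_mul, mul_ne_zero_iff, (prob_apply_pos μ hpos _ h).ne', ne_eq,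
    not_false_eq_true, and_self] at this
  rw [this]

theorem condMI_sub_condMI_le_of_ent_chain (hpos : ∀ ω, 0 ≤ μ ω)
    (hchain : ent μ (fun ω => (U ω, V ω, X ω, Z ω, Y ω)) + ent μ V + ent μ X + ent μ Z
      = ent μ (fun ω => (U ω, V ω)) + ent μ (fun ω => (V ω, X ω))
        + ent μ (fun ω => (X ω, Z ω)) + ent μ (fun ω => (Z ω, Y ω))) :
    condMI μ V Z U - condMI μ V Y U ≤ mutInf μ X Z - mutInf μ X Y := by
  have h₁ := condMI_nonneg μ hpos X U (fun ω => (Y ω, V ω))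
  have h₂ := condMI_nonneg μ hpos U Z Y
  have h₃ := condMI_nonneg μ hpos U Y V
  have h₄ := condMI_nonneg μ hpos V Y X
  have h₅ := condMI_nonneg μ hpos V Y (fun ω => (Z ω, U ω))
  have h₆ := condMI_nonneg μ hpos X Z (fun ω => (U ω, Y ω, V ω))
  have e₁ : ent μ (fun ω => (X ω, Z ω, U ω, Y ω, V ω))
      = ent μ (fun ω => (U ω, V ω, X ω, Z ω, Y ω)) :=
    ent_congr μ fun _ _ => by simp only [Prod.mk.injEq]; tauto
  have e₂ : ent μ (fun ω => (Z ω, U ω, Y ω, V ω))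
      = ent μ (fun ω => (V ω, Y ω, Z ω, U ω)) :=
    ent_congr μ fun _ _ => by simp only [Prod.mk.injEq]; tauto
  have e₃ : ent μ (fun ω => (Y ω, Z ω, U ω))
      = ent μ (fun ω => (U ω, Z ω, Y ω)) :=
    ent_congr μ fun _ _ => by simp only [Prod.mk.injEq]; tauto
  have e₄ : ent μ (fun ω => (V ω, U ω)) = ent μ (fun ω => (U ω, V ω)) :=
    ent_congr μ fun _ _ => by simp only [Prod.mk.injEq]; tauto
  have e₅ : ent μ (fun ω => (Y ω, X ω)) = ent μ (fun ω => (X ω, Y ω)) :=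
    ent_congr μ fun _ _ => by simp only [Prod.mk.injEq]; tauto
  have e₆ : ent μ (fun ω => (U ω, Y ω, V ω))
      = ent μ (fun ω => (V ω, Y ω, U ω)) :=
    ent_congr μ fun _ _ => by simp only [Prod.mk.injEq]; tauto
  have e₇ : ent μ (fun ω => (X ω, Y ω, V ω))
      = ent μ (fun ω => (V ω, Y ω, X ω)) :=
    ent_congr μ fun _ _ => by simp only [Prod.mk.injEq]; tauto
  have e₈ : ent μ (fun ω => (U ω, Y ω)) = ent μ (fun ω => (Y ω, U ω)) :=
    ent_congr μ fun _ _ => by simp only [Prod.mk.injEq]; tauto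
  simp only [condMI, mutInf] at *
  linarith

end MarkovChain

theorem stmt_17_general {Ω αU αV αX αZ αY : Type*}
    [Fintype Ω] [Fintype αU] [Fintype αV] [Fintype αX] [Fintype αZ] [Fintype αY]
    [DecidableEq αU] [DecidableEq αV] [DecidableEq αX] [DecidableEq αZ] [DecidableEq αY]
    (μ : Ω → ℝ) (hpos : ∀ ω, 0 ≤ μ ω)
    (U : Ω → αU) (V : Ω → αV) (X : Ω → αX) (Z : Ω → αZ) (Y : Ω → αY)
    (hmarkov : ∀ (u : αU) (v : αV) (x : αX) (z : αZ) (y : αY),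
      prob μ (fun ω => (U ω, V ω, X ω, Z ω, Y ω)) (u, v, x, z, y)
          * prob μ V v * prob μ X x * prob μ Z z
        = prob μ (fun ω => (U ω, V ω)) (u, v) * prob μ (fun ω => (V ω, X ω)) (v, x)
          * prob μ (fun ω => (X ω, Z ω)) (x, z) * prob μ (fun ω => (Z ω, Y ω)) (z, y)) :
    condMI μ V Z U - condMI μ V Y U ≤ mutInf μ X Z - mutInf μ X Y := by
  exact condMI_sub_condMI_le_of_ent_chain μ U V X Z Y hpos
    (ent_eq_of_markov_chain μ U V X Z Y hpos hmarkov)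

/-- Data-processing step in the converse: if U ↔ V ↔ X ↔ Z̃ ↔ Y is a Markov
chain (expressed by the factorization of the joint law through the pairwise
consecutive marginals), then I(V;Z̃|U) − I(V;Y|U) ≤ I(X;Z̃) − I(X;Y). -/
theorem stmt_17 {Ω αU αV αX αZ αY : Type*}
    [Fintype Ω] [Fintype αU] [Fintype αV] [Fintype αX] [Fintype αZ] [Fintype αY]
    [DecidableEq αU] [DecidableEq αV] [DecidableEq αX] [DecidableEq αZ] [DecidableEq αY]
    (μ : Ω → ℝ) (hpos : ∀ ω, 0 ≤ μ ω) (hsum : ∑ ω, μ ω = 1)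
    (U : Ω → αU) (V : Ω → αV) (X : Ω → αX) (Z : Ω → αZ) (Y : Ω → αY)
    (hmarkov : ∀ (u : αU) (v : αV) (x : αX) (z : αZ) (y : αY),
      prob μ (fun ω => (U ω, V ω, X ω, Z ω, Y ω)) (u, v, x, z, y)
          * prob μ V v * prob μ X x * prob μ Z z
        = prob μ (fun ω => (U ω, V ω)) (u, v) * prob μ (fun ω => (V ω, X ω)) (v, x)
          * prob μ (fun ω => (X ω, Z ω)) (x, z) * prob μ (fun ω => (Z ω, Y ω)) (z, y)) :
    condMI μ V Z U - condMI μ V Y U ≤ mutInf μ X Z - mutInf μ X Y :=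
  stmt_17_general μ hpos U V X Z Y hmarkov
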